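/- In the ODE flow setting, let ν₀ be a Borel probability measure on ℝ^d with finite second moment (the distribution of initial conditions) and let μ, μ̂ be Borel probability measures on ℝ^ℓ with finite second moments (the true and approximate parameter distributions). For δ > 0 and x₀ in the topological support of ν₀ (so that ν₀ of the closed ball B̄(x₀, δ) is positive), let ν_{x₀,δ}(t) denote the pushforward under (x, θ) ↦ X(t; θ, x) of the product of the normalized restriction of ν₀ to B̄(x₀, δ) with μ, and let ν̂_{x₀,δ}(t) denote the analogous measure with μ̂ in place of μ. Then there exist constants C₀, C₁ > 0 depending only on the Lipschitz constant C such that for every x₀ in the support of ν₀, every δ > 0, and every t ∈ [0,T]: W₂(ν_{x₀,δ}(t), ν̂_{x₀,δ}(t)) ≤ 2δ e^{C₀ t/2} + (C₁ t e^{C₀ t})^{1/2} · W₂(μ, μ̂); consequently W₂²(ν_{x₀,δ}(t), ν̂_{x₀,δ}(t)) ≤ 8δ² e^{C₀ t} + 2 C₁ t e^{C₀ t} · W₂²(μ, μ̂). (This is the population-level, ODE specialization of Theorem 2.2: the local time-decoupled squared Wasserstein-2 distance between the conditioned solution laws is bounded by a δ² term plus a multiple of W₂²(μ, μ̂), so matching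 the parameter distributions forces the loss to be small.) -/

import Mathlib

open MeasureTheory Set

/-- The squared Wasserstein-2 distance between two Borel measures. -/
noncomputable def W2sq {E : Type*} [MeasurableSpace E] [NormedAddCommGroup E]
    (μ ν : Measure E) : ℝ :=
  sInf {r : ℝ | ∃ π : Measure (E × E), IsProbabilityMeasure π ∧
    π.map Prod.fst = μ ∧ π.map Prod.snd = ν ∧ r = ∫ p, ‖p.1 - p.2‖ ^ 2 ∂π}

/-- The Wasserstein-2 distance. -/
noncomputable def W2 {E : Type*} [MeasurableSpace E] [NormedAddCommGroup E]
    (μ ν : Measure E) : ℝ :=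
  Real.sqrt (W2sq μ ν)

/-- The law at time `t` of the ODE solution with initial condition distributed according
to the normalized restriction of `ν₀` to the closed ball `B̄(x₀, δ)` and parameter
distributed according to `μ` (independently). -/
noncomputable def condLaw {d l : ℕ}
    (X : ℝ → EuclideanSpace ℝ (Fin l) → EuclideanSpace ℝ (Fin d) → EuclideanSpace ℝ (Fin d))
    (ν₀ : Measure (EuclideanSpace ℝ (Fin d))) (μ : Measure (EuclideanSpace ℝ (Fin l)))
    (x₀ : EuclideanSpace ℝ (Fin d)) (δ : ℝ) (t : ℝ) :
    Measure (EuclideanSpace ℝ (Fin d)) :=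
  ((((ν₀ (Metric.closedBall x₀ δ))⁻¹ • ν₀.restrict (Metric.closedBall x₀ δ)).prod μ).map
    fun p => X t p.2 p.1)

/-!
Couple the two conditioned laws by running the flow from one and the same initial point, with
parameters drawn from a coupling of `μ` and `μ̂`. Grönwall's inequality gives
`‖X(t; θ, x) - X(t; θ̂, x)‖ ≤ (e^{Ct} - 1) ‖θ - θ̂‖ ≤ C t e^{Ct} ‖θ - θ̂‖`, so taking the infimum
over parameter couplings yields `W₂²(ν_{x₀,δ}(t), ν̂_{x₀,δ}(t)) ≤ C² T t e^{2Ct} W₂²(μ, μ̂)`,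
i.e. both bounds with `C₀ = 2C`, `C₁ = C² T`; as the initial points are shared, no `δ`-term
arises.
-/

open Filter Function ProbabilityTheory

lemma EuclideanSpace.norm_le_sum_abs {ι : Type*} [Fintype ι] (v : EuclideanSpace ℝ ι) :
    ‖v‖ ≤ ∑ i, |v i| := by
  rw [EuclideanSpace.norm_eq, Real.sqrt_le_left (Finset.sum_nonneg fun _ _ => abs_nonneg _)]
  simpa only [Real.norm_eq_abs] using
    Finset.sum_sq_le_sq_sum_of_nonneg fun i _ => norm_nonneg (v i)

lemma Real.exp_sub_one_le_mul_exp (x : ℝ) : Real.exp x - 1 ≤ x * Real.exp x := by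
  have h := mul_le_mul_of_nonneg_right (Real.one_sub_le_exp_neg x) (Real.exp_pos x).le
  rw [← Real.exp_add, neg_add_cancel, Real.exp_zero] at h
  linarith

lemma sq_exp_mul_sub_one_le {c t T : ℝ} (hc : 0 ≤ c) (ht : t ∈ Icc 0 T) :
    (Real.exp (c * t) - 1) ^ 2 ≤ c ^ 2 * T * t * Real.exp (2 * c * t) := by
  have hct : 0 ≤ c * t := mul_nonneg hc ht.1
  calc (Real.exp (c * t) - 1) ^ 2 ≤ (c * t * Real.exp (c * t)) ^ 2 :=
        pow_le_pow_left₀ (sub_nonneg.2 (Real.one_le_exp hct)) (Real.exp_sub_one_le_mul_exp _) 2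
    _ = c ^ 2 * t * t * Real.exp (2 * c * t) := by
        rw [show 2 * c * t = c * t + c * t by ring, Real.exp_add]; ring
    _ ≤ c ^ 2 * T * t * Real.exp (2 * c * t) := by
        have := ht.1; gcongr; exact ht.2

theorem norm_sub_le_of_lipschitz_param {E P : Type*} [NormedAddCommGroup E] [NormedSpace ℝ E]
    [SeminormedAddCommGroup P] {F : E → ℝ → P → E} {C T : ℝ} {θ θ' : P}
    (hF : ∀ x x', ∀ t ∈ Icc 0 T, ‖F x t θ - F x' t θ'‖ ≤ C * (‖x - x'‖ + ‖θ - θ'‖))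
    {u v : ℝ → E} (h0 : u 0 = v 0)
    (hu : ∀ t ∈ Icc 0 T, HasDerivWithinAt u (F (u t) t θ) (Icc 0 T) t)
    (hv : ∀ t ∈ Icc 0 T, HasDerivWithinAt v (F (v t) t θ') (Icc 0 T) t) :
    ∀ t ∈ Icc 0 T, ‖u t - v t‖ ≤ ‖θ - θ'‖ * (Real.exp (C * t) - 1) := by
  have hderiv : ∀ s ∈ Icc 0 T,
      HasDerivWithinAt (u - v) (F (u s) s θ - F (v s) s θ') (Icc 0 T) s :=
    fun s hs => (hu s hs).sub (hv s hs)
  intro t ht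
  have h := norm_le_gronwallBound_of_norm_deriv_right_le (δ := 0)
    (fun s hs => (hderiv s hs).continuousWithinAt)
    (fun s hs => (hderiv s (Ico_subset_Icc_self hs)).mono_of_mem_nhdsWithin
      (mem_of_superset (Icc_mem_nhdsGE hs.2) (Icc_subset_Icc_left hs.1)))
    (by simp [h0])
    (fun s hs => by simpa [mul_add] using hF (u s) (v s) s (Ico_subset_Icc_self hs)) t ht
  rcases eq_or_ne C 0 with rfl | hC
  · simpa [gronwallBound_K0] using h
  · simpa [gronwallBound_of_K_ne_0 hC, mul_div_cancel_left₀ _ hC] using h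

lemma map_prod_comp_snd {Ω P Q E : Type*} [MeasurableSpace Ω] [MeasurableSpace P]
    [MeasurableSpace Q] [MeasurableSpace E] (ρ : Measure Ω) (π : Measure Q) [SFinite ρ] [SFinite π]
    {Φ : Ω → P → E} (hΦ : Measurable (uncurry Φ)) {g : Q → P} (hg : Measurable g) :
    (ρ.prod π).map (fun q => Φ q.1 (g q.2)) = (ρ.prod (π.map g)).map (uncurry Φ) := by
  have h : ρ.prod (π.map g) = (ρ.prod π).map (Prod.map id g) := by
    rw [← Measure.map_prod_map _ _ measurable_id hg, Measure.map_id]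
  rw [h, Measure.map_map hΦ (measurable_id.prodMap hg)]
  rfl

section Coupling

variable {E : Type*} [NormedAddCommGroup E] [MeasurableSpace E]

lemma W2sq_le_integral {μ ν : Measure E} (π : Measure (E × E)) [IsProbabilityMeasure π]
    (h₁ : π.map Prod.fst = μ) (h₂ : π.map Prod.snd = ν) :
    W2sq μ ν ≤ ∫ p, ‖p.1 - p.2‖ ^ 2 ∂π :=
  csInf_le ⟨0, by rintro r ⟨π, -, -, -, rfl⟩; positivity⟩ ⟨π, inferInstance, h₁, h₂, rfl⟩

lemma le_mul_W2sq_of_forall_coupling {μ ν : Measure E} [IsProbabilityMeasure μ]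
    [IsProbabilityMeasure ν] {a K : ℝ} (hK : 0 ≤ K)
    (h : ∀ π : Measure (E × E), IsProbabilityMeasure π → π.map Prod.fst = μ →
      π.map Prod.snd = ν → a ≤ K * ∫ p, ‖p.1 - p.2‖ ^ 2 ∂π) :
    a ≤ K * W2sq μ ν := by
  rw [W2sq, ← smul_eq_mul, ← Real.sInf_smul_of_nonneg hK]
  refine le_csInf (Set.Nonempty.smul_set ⟨_, μ.prod ν, inferInstance, by simp, by simp, rfl⟩) ?_
  rintro _ ⟨r, ⟨π, hπ, h₁, h₂, rfl⟩, rfl⟩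
  exact h π hπ h₁ h₂

lemma W2sq_nonneg (μ ν : Measure E) [IsProbabilityMeasure μ] [IsProbabilityMeasure ν] :
    0 ≤ W2sq μ ν := by
  simpa using le_mul_W2sq_of_forall_coupling (μ := μ) (ν := ν) zero_le_one
    fun π _ _ _ => by positivity

variable [BorelSpace E] [SecondCountableTopology E]

lemma integrable_norm_sub_sq {π : Measure (E × E)}
    (h₁ : Integrable (fun x => ‖x‖ ^ 2) (π.map Prod.fst))
    (h₂ : Integrable (fun x => ‖x‖ ^ 2) (π.map Prod.snd)) :
    Integrable (fun p : E × E => ‖p.1 - p.2‖ ^ 2) π := by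
  have hsq : Continuous fun x : E => ‖x‖ ^ 2 := by fun_prop
  have i₁ := (integrable_map_measure hsq.aestronglyMeasurable measurable_fst.aemeasurable).1 h₁
  have i₂ := (integrable_map_measure hsq.aestronglyMeasurable measurable_snd.aemeasurable).1 h₂
  refine ((i₁.add i₂).const_mul 2).mono' (by fun_prop) (ae_of_all _ fun p => ?_)
  rw [Real.norm_of_nonneg (by positivity)]
  exact (pow_le_pow_left₀ (norm_nonneg _) (norm_sub_le _ _) 2).trans add_sq_le

variable {Ω P : Type*} [MeasurableSpace Ω]

theorem W2sq_map_prod_le [NormedAddCommGroup P] [MeasurableSpace P] [BorelSpace P]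
    [SecondCountableTopology P] {Φ : Ω → P → E} (hΦ : Measurable (uncurry Φ)) {K : ℝ}
    (hK : 0 ≤ K) (hΦK : ∀ x θ θ', ‖Φ x θ - Φ x θ'‖ ^ 2 ≤ K * ‖θ - θ'‖ ^ 2)
    (ρ : Measure Ω) [IsProbabilityMeasure ρ] {μ ν : Measure P} [IsProbabilityMeasure μ]
    [IsProbabilityMeasure ν] (hμ : Integrable (fun θ => ‖θ‖ ^ 2) μ)
    (hν : Integrable (fun θ => ‖θ‖ ^ 2) ν) :
    W2sq ((ρ.prod μ).map (uncurry Φ)) ((ρ.prod ν).map (uncurry Φ)) ≤ K * W2sq μ ν := by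
  refine le_mul_W2sq_of_forall_coupling hK fun π _ h₁ h₂ => ?_
  set G : Ω × (P × P) → E × E := fun q => (Φ q.1 q.2.1, Φ q.1 q.2.2)
  have hG : Measurable G :=
    (hΦ.comp (measurable_fst.prodMk measurable_snd.fst)).prodMk
      (hΦ.comp (measurable_fst.prodMk measurable_snd.snd))
  have := Measure.isProbabilityMeasure_map (μ := ρ.prod π) hG.aemeasurable
  have hcost := integrable_norm_sub_sq (h₁ ▸ hμ) (h₂ ▸ hν)
  calc W2sq _ _ ≤ ∫ p, ‖p.1 - p.2‖ ^ 2 ∂((ρ.prod π).map G) := by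
        refine W2sq_le_integral _ ?_ ?_
        · rw [Measure.map_map measurable_fst hG, ← h₁]
          exact map_prod_comp_snd ρ π hΦ measurable_fst
        · rw [Measure.map_map measurable_snd hG, ← h₂]
          exact map_prod_comp_snd ρ π hΦ measurable_snd
    _ = ∫ q, ‖Φ q.1 q.2.1 - Φ q.1 q.2.2‖ ^ 2 ∂(ρ.prod π) :=
        integral_map hG.aemeasurable (by fun_prop)
    _ ≤ ∫ q, K * ‖q.2.1 - q.2.2‖ ^ 2 ∂(ρ.prod π) :=
        integral_mono_of_nonneg (ae_of_all _ fun _ => by positivity)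
          ((hcost.comp_snd ρ).const_mul K) (ae_of_all _ fun q => hΦK _ _ _)
    _ = K * ∫ p, ‖p.1 - p.2‖ ^ 2 ∂π := by
        rw [integral_const_mul, integral_fun_snd (fun p : P × P => ‖p.1 - p.2‖ ^ 2)]
        simp

end Coupling

theorem ode_local_time_decoupled_W2_parameter_bound_general
    {d l : ℕ} (C T : ℝ) (hC : 0 < C) (hT : 0 < T)
    (f : EuclideanSpace ℝ (Fin d) → ℝ → EuclideanSpace ℝ (Fin l) → EuclideanSpace ℝ (Fin d))
    (hLip : ∀ (x xhat : EuclideanSpace ℝ (Fin d)) (θ θhat : EuclideanSpace ℝ (Fin l)),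
      ∀ t ∈ Icc (0 : ℝ) T,
      ∑ i, |f x t θ i - f xhat t θhat i| ≤ C * (‖x - xhat‖ + ‖θ - θhat‖))
    (X : ℝ → EuclideanSpace ℝ (Fin l) → EuclideanSpace ℝ (Fin d) → EuclideanSpace ℝ (Fin d))
    (hX0 : ∀ θ x₀, X 0 θ x₀ = x₀)
    (hXode : ∀ θ x₀, ∀ t ∈ Icc (0 : ℝ) T,
      HasDerivWithinAt (fun s => X s θ x₀) (f (X t θ x₀) t θ) (Icc 0 T) t)
    (hXcont : ContinuousOn
      (fun p : ℝ × EuclideanSpace ℝ (Fin l) × EuclideanSpace ℝ (Fin d) => X p.1 p.2.1 p.2.2)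
      (Icc 0 T ×ˢ univ ×ˢ univ))
    (ν₀ : Measure (EuclideanSpace ℝ (Fin d))) (hν₀ : IsProbabilityMeasure ν₀)
    (μ μhat : Measure (EuclideanSpace ℝ (Fin l)))
    (hμ : IsProbabilityMeasure μ) (hμhat : IsProbabilityMeasure μhat)
    (hμmom : Integrable (fun θ => ‖θ‖ ^ 2) μ)
    (hμhatmom : Integrable (fun θ => ‖θ‖ ^ 2) μhat) :
    ∃ C₀ > (0 : ℝ), ∃ C₁ > (0 : ℝ),
      ∀ (x₀ : EuclideanSpace ℝ (Fin d)) (δ : ℝ), 0 < δ →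
        ν₀ (Metric.closedBall x₀ δ) ≠ 0 →
        ∀ t ∈ Icc (0 : ℝ) T,
          W2 (condLaw X ν₀ μ x₀ δ t) (condLaw X ν₀ μhat x₀ δ t) ≤
              2 * δ * Real.exp (C₀ * t / 2) +
                Real.sqrt (C₁ * t * Real.exp (C₀ * t)) * W2 μ μhat ∧
          W2sq (condLaw X ν₀ μ x₀ δ t) (condLaw X ν₀ μhat x₀ δ t) ≤
              8 * δ ^ 2 * Real.exp (C₀ * t) +
                2 * C₁ * t * Real.exp (C₀ * t) * W2sq μ μhat := by
  refine ⟨2 * C, by positivity, C ^ 2 * T, by positivity, fun x₀ δ _ hB t ht => ?_⟩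
  have ht₀ := ht.1
  have hρ := cond_isProbabilityMeasure (μ := ν₀) hB
  have hflow : ∀ x θ θ', ‖X t θ x - X t θ' x‖ ^ 2
      ≤ C ^ 2 * T * t * Real.exp (2 * C * t) * ‖θ - θ'‖ ^ 2 := fun x θ θ' => by
    have h := norm_sub_le_of_lipschitz_param
      (fun y y' s hs => (EuclideanSpace.norm_le_sum_abs _).trans (hLip y y' θ θ' s hs))
      (u := fun s => X s θ x) (v := fun s => X s θ' x) (by simp only [hX0])
      (hXode θ x) (hXode θ' x) t ht
    calc _ ≤ (Real.exp (C * t) - 1) ^ 2 * ‖θ - θ'‖ ^ 2 := by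
          rw [← mul_pow, mul_comm]; exact pow_le_pow_left₀ (norm_nonneg _) h 2
      _ ≤ _ := by gcongr; exact sq_exp_mul_sub_one_le hC.le ht
  have hXt : Measurable (uncurry fun x θ => X t θ x) :=
    (hXcont.comp_continuous (f := fun p : _ × _ => (t, p.2, p.1)) (by fun_prop)
      fun _ => ⟨ht, trivial, trivial⟩).measurable
  have hmain : W2sq (condLaw X ν₀ μ x₀ δ t) (condLaw X ν₀ μhat x₀ δ t)
      ≤ C ^ 2 * T * t * Real.exp (2 * C * t) * W2sq μ μhat :=
    W2sq_map_prod_le hXt (by positivity) hflow (ν₀[|Metric.closedBall x₀ δ]) hμmom hμhatmom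
  have hw := W2sq_nonneg μ μhat
  refine ⟨?_, ?_⟩
  · calc W2 _ _ ≤ Real.sqrt (C ^ 2 * T * t * Real.exp (2 * C * t) * W2sq μ μhat) :=
          Real.sqrt_le_sqrt hmain
      _ = Real.sqrt (C ^ 2 * T * t * Real.exp (2 * C * t)) * W2 μ μhat :=
          Real.sqrt_mul (by positivity) _
      _ ≤ _ := le_add_of_nonneg_left (by positivity)
  · have hKw : 0 ≤ C ^ 2 * T * t * Real.exp (2 * C * t) * W2sq μ μhat :=
      mul_nonneg (by positivity) hw
    exact hmain.trans (le_add_of_nonneg_of_le (by positivity) (by linarith))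

/-- population-level ODE specialization of Theorem 2.2: the local
time-decoupled `W₂` distance between the conditioned solution laws obtained from the true
and the approximate parameter distributions `μ, μ̂` is bounded by a `δ` term plus a
multiple of `W₂(μ, μ̂)`; squaring, `W₂² ≤ 8δ²e^{C₀t} + 2C₁te^{C₀t}·W₂²(μ, μ̂)`. -/
theorem ode_local_time_decoupled_W2_parameter_bound
    {d l : ℕ} (C T : ℝ) (hC : 0 < C) (hT : 0 < T)
    (f : EuclideanSpace ℝ (Fin d) → ℝ → EuclideanSpace ℝ (Fin l) → EuclideanSpace ℝ (Fin d))
    (hf_cont : ContinuousOn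
      (fun p : EuclideanSpace ℝ (Fin d) × ℝ × EuclideanSpace ℝ (Fin l) => f p.1 p.2.1 p.2.2)
      (univ ×ˢ Icc 0 T ×ˢ univ))
    (hLip : ∀ (x xhat : EuclideanSpace ℝ (Fin d)) (θ θhat : EuclideanSpace ℝ (Fin l)),
      ∀ t ∈ Icc (0 : ℝ) T,
      ∑ i, |f x t θ i - f xhat t θhat i| ≤ C * (‖x - xhat‖ + ‖θ - θhat‖))
    (hM₀ : ∃ M₀ : ℝ, ∀ t ∈ Icc (0 : ℝ) T, ∑ i, |f 0 t 0 i| ≤ M₀)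
    (X : ℝ → EuclideanSpace ℝ (Fin l) → EuclideanSpace ℝ (Fin d) → EuclideanSpace ℝ (Fin d))
    (hX0 : ∀ θ x₀, X 0 θ x₀ = x₀)
    (hXode : ∀ θ x₀, ∀ t ∈ Icc (0 : ℝ) T,
      HasDerivWithinAt (fun s => X s θ x₀) (f (X t θ x₀) t θ) (Icc 0 T) t)
    (hXcont : ContinuousOn
      (fun p : ℝ × EuclideanSpace ℝ (Fin l) × EuclideanSpace ℝ (Fin d) => X p.1 p.2.1 p.2.2)
      (Icc 0 T ×ˢ univ ×ˢ univ))
    (ν₀ : Measure (EuclideanSpace ℝ (Fin d))) (hν₀ : IsProbabilityMeasure ν₀)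
    (hν₀mom : Integrable (fun x => ‖x‖ ^ 2) ν₀)
    (μ μhat : Measure (EuclideanSpace ℝ (Fin l)))
    (hμ : IsProbabilityMeasure μ) (hμhat : IsProbabilityMeasure μhat)
    (hμmom : Integrable (fun θ => ‖θ‖ ^ 2) μ)
    (hμhatmom : Integrable (fun θ => ‖θ‖ ^ 2) μhat) :
    ∃ C₀ > (0 : ℝ), ∃ C₁ > (0 : ℝ),
      ∀ (x₀ : EuclideanSpace ℝ (Fin d)) (δ : ℝ), 0 < δ →
        ν₀ (Metric.closedBall x₀ δ) ≠ 0 →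
        ∀ t ∈ Icc (0 : ℝ) T,
          W2 (condLaw X ν₀ μ x₀ δ t) (condLaw X ν₀ μhat x₀ δ t) ≤
              2 * δ * Real.exp (C₀ * t / 2) +
                Real.sqrt (C₁ * t * Real.exp (C₀ * t)) * W2 μ μhat ∧
          W2sq (condLaw X ν₀ μ x₀ δ t) (condLaw X ν₀ μhat x₀ δ t) ≤
              8 * δ ^ 2 * Real.exp (C₀ * t) +
                2 * C₁ * t * Real.exp (C₀ * t) * W2sq μ μhat :=
  ode_local_time_decoupled_W2_parameter_bound_general C T hC hT f hLip X hX0 hXode hXcont ν₀ hν₀ μ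
    μhat hμ hμhat hμmom hμhatmom
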